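/- arXiv:2410.02870 — 2 statements merged into one kernel-verified Lean document; each statement's English description precedes it below -/
import Mathlib

section
/- Let J be a real symmetric k × k matrix, let λ₁ be its largest eigenvalue, assume λ₁ > 0, and let v₁ be a unit eigenvector of J for λ₁. Set q = √λ₁ · v₁. Then q minimizes the Frobenius distance to J among all rank-one outer products: for every p ∈ ℝ^k, ∑_{i,j=1}^{k} (J_{ij} − q_i q_j)² ≤ ∑_{i,j=1}^{k} (J_{ij} − p_i p_j)². -/
/-!
If every eigenvalue of the symmetric matrix `J` is at most `λ`, then `λ • 1 - J` is positive
semidefinite, i.e. `pᵀ J p ≤ λ ‖p‖²`. Expanding the square and writing `t = (√λ)² = max λ 0`,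
`∑ (J i j - p i p j)² = ‖J‖_F² - 2 pᵀ J p + ‖p‖⁴ ≥ ‖J‖_F² - 2 t ‖p‖² + ‖p‖⁴ ≥ ‖J‖_F² - t²`,
and `q = √λ • v₁` attains this bound because `‖q‖² = t` and `qᵀ J q = t λ = t²`.
-/

open Matrix

namespace Matrix

variable {n : Type*} [Fintype n]

theorem posSemidef_smul_one_sub_of_eigenvalue_le [DecidableEq n] {A : Matrix n n ℝ}
    (hA : A.IsHermitian) {c : ℝ}
    (h : ∀ (μ : ℝ) (v : n → ℝ), v ≠ 0 → A *ᵥ v = μ • v → μ ≤ c) :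
    (c • 1 - A).PosSemidef := by
  have hB : (c • 1 - A).IsHermitian := (isHermitian_one.smul (IsSelfAdjoint.all c)).sub hA
  rw [hB.posSemidef_iff_eigenvalues_nonneg]
  intro i
  set e : n → ℝ := ⇑(hB.eigenvectorBasis i)
  have he : e ≠ 0 := fun h0 =>
    hB.eigenvectorBasis.orthonormal.ne_zero i (by ext j; exact congrFun h0 j)
  have hAe : A *ᵥ e = (c - hB.eigenvalues i) • e := by
    have := hB.mulVec_eigenvectorBasis i
    rw [sub_mulVec, smul_mulVec, one_mulVec] at this
    rw [sub_smul, ← this, sub_sub_cancel]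
  simpa using h _ e he hAe

theorem dotProduct_mulVec_le_of_eigenvalue_le {A : Matrix n n ℝ} (hA : A.IsHermitian) {c : ℝ}
    (h : ∀ (μ : ℝ) (v : n → ℝ), v ≠ 0 → A *ᵥ v = μ • v → μ ≤ c) (p : n → ℝ) :
    p ⬝ᵥ (A *ᵥ p) ≤ c * (p ⬝ᵥ p) := by
  classical
  have := (posSemidef_smul_one_sub_of_eigenvalue_le hA h).dotProduct_mulVec_nonneg p
  rw [star_trivial, sub_mulVec, smul_mulVec, one_mulVec, dotProduct_sub, dotProduct_smul,
    smul_eq_mul] at this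
  linarith

theorem sum_sum_sub_mul_sq {R : Type*} [CommRing R] (A : Matrix n n R) (p : n → R) :
    ∑ i, ∑ j, (A i j - p i * p j) ^ 2 =
      ∑ i, ∑ j, A i j ^ 2 - 2 * (p ⬝ᵥ (A *ᵥ p)) + (p ⬝ᵥ p) ^ 2 := by
  have hpp : (p ⬝ᵥ p) ^ 2 = ∑ i, ∑ j, p i * p i * (p j * p j) := by
    rw [sq, dotProduct, Finset.sum_mul_sum]
  rw [hpp]
  simp only [dotProduct, mulVec, Finset.mul_sum, ← Finset.sum_sub_distrib,
    ← Finset.sum_add_distrib]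
  exact Finset.sum_congr rfl fun i _ => Finset.sum_congr rfl fun j _ => by ring

end Matrix

theorem stmt_8_general {k : ℕ} (J : Matrix (Fin k) (Fin k) ℝ) (hJ : J.IsSymm)
    (lam₁ : ℝ)
    (hmax : ∀ (lam : ℝ) (v : Fin k → ℝ), v ≠ 0 → J.mulVec v = lam • v → lam ≤ lam₁)
    (v₁ : Fin k → ℝ) (hunit : ∑ i, v₁ i ^ 2 = 1) (heig : J.mulVec v₁ = lam₁ • v₁) :
    ∀ p : Fin k → ℝ,
      ∑ i, ∑ j, (J i j - (Real.sqrt lam₁ * v₁ i) * (Real.sqrt lam₁ * v₁ j)) ^ 2 ≤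
      ∑ i, ∑ j, (J i j - p i * p j) ^ 2 := by
  intro p
  set q := Real.sqrt lam₁ • v₁
  set t := Real.sqrt lam₁ ^ 2
  have ht : t = max lam₁ 0 := Real.sq_sqrt'
  have hlam : lam₁ ≤ t := ht ▸ le_max_left lam₁ 0
  have htlam : t * lam₁ = t ^ 2 := by
    rw [ht]; rcases le_total lam₁ 0 with h | h <;> simp [h, sq]
  have hv₁ : v₁ ⬝ᵥ v₁ = 1 := by simpa [dotProduct, sq] using hunit
  have hqq : q ⬝ᵥ q = t := by simp [q, smul_dotProduct, dotProduct_smul, hv₁, t, sq]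
  have hqJq : q ⬝ᵥ (J *ᵥ q) = t * lam₁ := by
    simp only [q, mulVec_smul, heig, smul_dotProduct, dotProduct_smul, hv₁, smul_eq_mul, t]
    ring
  have hp : 0 ≤ p ⬝ᵥ p := dotProduct_self_star_nonneg p
  have hpJp : p ⬝ᵥ (J *ᵥ p) ≤ t * (p ⬝ᵥ p) :=
    (dotProduct_mulVec_le_of_eigenvalue_le (isHermitian_iff_isSymm.mpr hJ) hmax p).trans
      (mul_le_mul_of_nonneg_right hlam hp)
  calc ∑ i, ∑ j, (J i j - (Real.sqrt lam₁ * v₁ i) * (Real.sqrt lam₁ * v₁ j)) ^ 2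
      = ∑ i, ∑ j, J i j ^ 2 - 2 * (q ⬝ᵥ (J *ᵥ q)) + (q ⬝ᵥ q) ^ 2 := sum_sum_sub_mul_sq J q
    _ ≤ ∑ i, ∑ j, J i j ^ 2 - 2 * (p ⬝ᵥ (J *ᵥ p)) + (p ⬝ᵥ p) ^ 2 := by
      rw [hqq, hqJq, htlam]
      nlinarith [sq_nonneg (p ⬝ᵥ p - t)]
    _ = ∑ i, ∑ j, (J i j - p i * p j) ^ 2 := (sum_sum_sub_mul_sq J p).symm

/-- Let `J` be a real symmetric `k × k` matrix, `λ₁` its largest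
eigenvalue with `λ₁ > 0`, and `v₁` a unit eigenvector for `λ₁`. Then
`q = √λ₁ · v₁` minimizes the Frobenius distance to `J` among all rank-one outer
products: for every `p ∈ ℝᵏ`,
`∑_{i,j} (J_{ij} − q_i q_j)² ≤ ∑_{i,j} (J_{ij} − p_i p_j)²`. -/
theorem stmt_8 {k : ℕ} (J : Matrix (Fin k) (Fin k) ℝ) (hJ : J.IsSymm)
    (lam₁ : ℝ) (hpos : 0 < lam₁)
    (hmax : ∀ (lam : ℝ) (v : Fin k → ℝ), v ≠ 0 → J.mulVec v = lam • v → lam ≤ lam₁)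
    (v₁ : Fin k → ℝ) (hunit : ∑ i, v₁ i ^ 2 = 1) (heig : J.mulVec v₁ = lam₁ • v₁) :
    ∀ p : Fin k → ℝ,
      ∑ i, ∑ j, (J i j - (Real.sqrt lam₁ * v₁ i) * (Real.sqrt lam₁ * v₁ j)) ^ 2 ≤
      ∑ i, ∑ j, (J i j - p i * p j) ^ 2 :=
  stmt_8_general J hJ lam₁ hmax v₁ hunit heig
end

section
/- Define vector fields Y₃, Y₄, Y₅ on the open subset U = {(r₁, r₂, r₃, θ, φ) ∈ ℝ⁵ : sin φ ≠ 0} of ℝ⁵ by Y₃(r₁,r₂,r₃,θ,φ) = (cos θ sin φ, sin θ sin φ, cos φ, 0, 0), Y₄(r₁,r₂,r₃,θ,φ) = (0, 0, 0, −1/sin φ, 0), Y₅(r₁,r₂,r₃,θ,φ) = (0, 0, 0, 0, 1). Then Y₃, Y₄, Y₅ satisfy Hörmander's rank condition at step 2 on U: at every point x ∈ U, the five vectors Y₃(x), Y₄(x), Y₅(x), [Y₄, Y₃](x), [Y₅, Y₃](x) span ℝ⁵, where [X, Y](x) = DY(x)·X(x) − DX(x)·Y(x) denotes the Lie bracket of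 smooth vector fields on ℝ⁵. -/
open Real

/-- The vector field `Y₃` on the chart of `ℝ³ ⋊ S²`, encoding the tangent direction
`n(θ, φ) = (cos θ sin φ, sin θ sin φ, cos φ)` (coordinates `(r₁, r₂, r₃, θ, φ)`,
with `θ = x 3`, `φ = x 4`). -/
noncomputable def Y₃ : (Fin 5 → ℝ) → (Fin 5 → ℝ) := fun x =>
  ![Real.cos (x 3) * Real.sin (x 4), Real.sin (x 3) * Real.sin (x 4), Real.cos (x 4), 0, 0]

/-- The vector field `Y₄ = −(1/sin φ) ∂_θ`. -/
noncomputable def Y₄ : (Fin 5 → ℝ) → (Fin 5 → ℝ) := fun x =>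
  ![0, 0, 0, -1 / Real.sin (x 4), 0]

/-- The vector field `Y₅ = ∂_φ`. -/
noncomputable def Y₅ : (Fin 5 → ℝ) → (Fin 5 → ℝ) := fun _ =>
  ![0, 0, 0, 0, 1]

/-- The Lie bracket of vector fields on `ℝ⁵`:
`[X, Y](x) = DY(x)·X(x) − DX(x)·Y(x)`, with `D` the Fréchet derivative. -/
noncomputable def lieBracket (X Y : (Fin 5 → ℝ) → (Fin 5 → ℝ)) (x : Fin 5 → ℝ) :
    Fin 5 → ℝ :=
  fderiv ℝ Y x (X x) - fderiv ℝ X x (Y x)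

/-! At a point with `sin φ ≠ 0`, `Y₃ = n`, `[Y₄, Y₃] = -(1 / sin φ) ∂_θ n = (sin θ, -cos θ, 0)`
and `[Y₅, Y₃] = ∂_φ n` form an orthonormal frame of the spatial factor `ℝ³`, while `Y₄` and `Y₅`
are nonzero multiples of `∂_θ` and `∂_φ`. Hence the five vectors contain, up to linear combination,
the whole standard basis of `ℝ⁵`. -/

noncomputable def radialDir (θ φ : ℝ) : Fin 5 → ℝ :=
  ![cos θ * sin φ, sin θ * sin φ, cos φ, 0, 0]

noncomputable def azimuthalDir (θ : ℝ) : Fin 5 → ℝ :=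
  ![sin θ, -cos θ, 0, 0, 0]

noncomputable def polarDir (θ φ : ℝ) : Fin 5 → ℝ :=
  ![cos θ * cos φ, sin θ * cos φ, -sin φ, 0, 0]

/-- The three vectors form an orthonormal basis of `ℝ³ × 0`, so `eⱼ = Σ_f ⟨eⱼ, f⟩ f`. -/
lemma single_eq_frame_expansion (θ φ : ℝ) {j : Fin 5} (hj : (j : ℕ) < 3) :
    (Pi.single j 1 : Fin 5 → ℝ) = radialDir θ φ j • radialDir θ φ +
      azimuthalDir θ j • azimuthalDir θ + polarDir θ φ j • polarDir θ φ := by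
  have hθ := sin_sq_add_cos_sq θ
  have hφ := sin_sq_add_cos_sq φ
  ext i
  fin_cases j <;> fin_cases i <;> simp [radialDir, azimuthalDir, polarDir] at hj ⊢ <;> grind

open ContinuousLinearMap in
lemma hasFDerivAt_Y₃ (x : Fin 5 → ℝ) :
    HasFDerivAt Y₃ ((proj (R := ℝ) 3).smulRight (-sin (x 4) • azimuthalDir (x 3)) +
      (proj (R := ℝ) 4).smulRight (polarDir (x 3) (x 4))) x := by
  have h3 := hasFDerivAt_apply (𝕜 := ℝ) 3 x
  have h4 := hasFDerivAt_apply (𝕜 := ℝ) 4 x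
  rw [hasFDerivAt_pi']
  intro i
  fin_cases i
  · exact (h3.cos.mul h4.sin).congr_fderiv (by ext v; simp [azimuthalDir, polarDir]; ring)
  · exact (h3.sin.mul h4.sin).congr_fderiv (by ext v; simp [azimuthalDir, polarDir]; ring)
  · exact h4.cos.congr_fderiv (by ext v; simp [azimuthalDir, polarDir]; ring)
  all_goals
    exact (hasFDerivAt_const (0 : ℝ) x).congr_fderiv (by ext v; simp [azimuthalDir, polarDir])

lemma fderiv_comp_eval_apply_eq_zero {ι E : Type*} [Fintype ι] [NormedAddCommGroup E] [NormedSpace ℝ E]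
    {g : ℝ → E} {x v : ι → ℝ} {i : ι} (hg : DifferentiableAt ℝ g (x i)) (hv : v i = 0) :
    fderiv ℝ (fun y => g (y i)) x v = 0 := by
  have hcomp : HasFDerivAt (fun y => g (y i)) ((fderiv ℝ g (x i)).comp (.proj i)) x :=
    hg.hasFDerivAt.comp x (hasFDerivAt_apply i x)
  simp [hcomp.fderiv, hv]

lemma Y₄_eq_smul_single (x : Fin 5 → ℝ) : Y₄ x = (-1 / sin (x 4)) • Pi.single 3 1 := by
  ext i; fin_cases i <;> simp [Y₄]

lemma fderiv_Y₄_apply_Y₃ {x : Fin 5 → ℝ} (hx : sin (x 4) ≠ 0) : fderiv ℝ Y₄ x (Y₃ x) = 0 := by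
  rw [show Y₄ = fun y => (-1 / sin (y 4)) • Pi.single 3 1 from funext Y₄_eq_smul_single]
  exact fderiv_comp_eval_apply_eq_zero (g := fun t => (-1 / sin t) • Pi.single 3 1)
    (by fun_prop (disch := exact hx)) rfl

lemma Y₅_eq_single (x : Fin 5 → ℝ) : Y₅ x = Pi.single 4 1 := by
  ext i; fin_cases i <;> simp [Y₅]

lemma lieBracket_Y₄_Y₃ {x : Fin 5 → ℝ} (hx : sin (x 4) ≠ 0) :
    lieBracket Y₄ Y₃ x = azimuthalDir (x 3) := by
  rw [lieBracket, fderiv_Y₄_apply_Y₃ hx, (hasFDerivAt_Y₃ x).fderiv, Y₄_eq_smul_single]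
  ext i
  simp [field]

lemma lieBracket_Y₅_Y₃ (x : Fin 5 → ℝ) : lieBracket Y₅ Y₃ x = polarDir (x 3) (x 4) := by
  have hY₅ : HasFDerivAt Y₅ (0 : (Fin 5 → ℝ) →L[ℝ] (Fin 5 → ℝ)) x := hasFDerivAt_const _ x
  rw [lieBracket, (hasFDerivAt_Y₃ x).fderiv, hY₅.fderiv]
  ext i
  simp [Y₅_eq_single]

/-- The vector fields `Y₃, Y₄, Y₅` satisfy Hörmander's rank
condition at step 2 on the open set `U = {sin φ ≠ 0}`: at every point `x ∈ U`,
the five vectors `Y₃(x), Y₄(x), Y₅(x), [Y₄, Y₃](x), [Y₅, Y₃](x)` span `ℝ⁵`. -/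
theorem stmt_13 :
    ∀ x : Fin 5 → ℝ, Real.sin (x 4) ≠ 0 →
      Submodule.span ℝ
        ({Y₃ x, Y₄ x, Y₅ x, lieBracket Y₄ Y₃ x, lieBracket Y₅ Y₃ x} :
          Set (Fin 5 → ℝ)) = ⊤ := by
  intro x hx
  rw [lieBracket_Y₄_Y₃ hx, lieBracket_Y₅_Y₃, show Y₃ x = radialDir (x 3) (x 4) from rfl]
  set V := Submodule.span ℝ ({radialDir (x 3) (x 4), Y₄ x, Y₅ x, azimuthalDir (x 3),
    polarDir (x 3) (x 4)} : Set (Fin 5 → ℝ))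
  have single_mem (j : Fin 5) : Pi.single j 1 ∈ V := by
    obtain hj | rfl | rfl : (j : ℕ) < 3 ∨ j = 3 ∨ j = 4 := by omega
    · rw [single_eq_frame_expansion (x 3) (x 4) hj]
      refine add_mem (add_mem ?_ ?_) ?_ <;> exact V.smul_mem _ (Submodule.subset_span (by simp))
    · have h : Pi.single 3 1 = (-sin (x 4)) • Y₄ x := by
        rw [Y₄_eq_smul_single, smul_smul, show -sin (x 4) * (-1 / sin (x 4)) = 1 by field_simp,
          one_smul]
      exact h ▸ V.smul_mem _ (Submodule.subset_span (by simp))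
    · exact Y₅_eq_single x ▸ Submodule.subset_span (by simp)
  rw [eq_top_iff, ← (Pi.basisFun ℝ (Fin 5)).span_eq, Submodule.span_le]
  rintro _ ⟨j, rfl⟩
  simpa using single_mem j
end
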